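/- The clobber position ooxo is equivalent to the sum of the clobber positions xxo and ox. -/

import Mathlib

namespace SetTheory

universe u

/-- Pre-games, as in Mathlib (Dec 2024), which no longer contains combinatorial game theory. -/
inductive PGame : Type (u + 1)
  | mk : ∀ α β : Type u, (α → PGame) → (β → PGame) → PGame

namespace PGame

def ofLists (L R : List PGame.{u}) : PGame.{u} :=
  mk (ULift (Fin L.length)) (ULift (Fin R.length)) (fun i => L.get i.down) fun j => R.get j.down

instance : Zero PGame.{u} := ⟨⟨PEmpty, PEmpty, PEmpty.elim, PEmpty.elim⟩⟩

/-- Simultaneously `(x ≤ y, x ⧏ y)`, by the usual mutual recursion. -/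
noncomputable def leLf (x : PGame.{u}) : PGame.{u} → Prop × Prop :=
  PGame.rec (motive := fun _ => PGame.{u} → Prop × Prop)
    (fun _ _ _ _ IHL IHR y =>
      PGame.rec (motive := fun _ => Prop × Prop)
        (fun yl yr yL yR JL JR =>
          ((∀ i, (IHL i (mk yl yr yL yR)).2) ∧ ∀ j, (JR j).2,
           (∃ i, (JL i).1) ∨ ∃ j, (IHR j (mk yl yr yL yR)).1)) y) x

noncomputable instance : LE PGame.{u} := ⟨fun x y => (leLf x y).1⟩

/-- Equivalence of pre-games: `x ≤ y ∧ y ≤ x`. -/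
instance : HasEquiv PGame.{u} := ⟨fun x y => x ≤ y ∧ y ≤ x⟩

/-- Disjunctive sum. -/
noncomputable def add (x : PGame.{u}) : PGame.{u} → PGame.{u} :=
  PGame.rec (motive := fun _ => PGame.{u} → PGame.{u})
    (fun xl xr _ _ IHL IHR y =>
      PGame.rec (motive := fun _ => PGame.{u})
        (fun yl yr yL yR JL JR =>
          mk (xl ⊕ yl) (xr ⊕ yr)
            (Sum.rec (fun i => IHL i (mk yl yr yL yR)) JL)
            (Sum.rec (fun j => IHR j (mk yl yr yL yR)) JR)) y) x

noncomputable instance : Add PGame.{u} := ⟨add⟩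

end PGame

end SetTheory

open SetTheory PGame

inductive Cell | x | o | e
deriving DecidableEq

abbrev Pos := List Cell

/-- All positions reachable by one move of the player with stones `me`
clobbering an adjacent stone of the opponent `opp`. -/
def movesAux (me opp : Cell) : Pos → List Pos
  | a :: b :: rest =>
      (if a = me ∧ b = opp then [Cell.e :: me :: rest] else []) ++
      (if a = opp ∧ b = me then [me :: Cell.e :: rest] else []) ++
      (movesAux me opp (b :: rest)).map (a :: ·)
  | _ => []

def leftMoves (p : Pos) : List Pos := movesAux Cell.x Cell.o p
def rightMoves (p : Pos) : List Pos := movesAux Cell.o Cell.x p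

def stones (p : Pos) : Nat := p.countP (· != Cell.e)

/-- Game value of a clobber position, via fuel recursion (each move removes one stone). -/
def valueFuel : Nat → Pos → PGame
  | 0, _ => 0
  | n+1, p => PGame.ofLists ((leftMoves p).map (valueFuel n)) ((rightMoves p).map (valueFuel n))

def value (p : Pos) : PGame := valueFuel (stones p) p


/-!
The three positions have small canonical values: in `xxo` Left can only move to `x_x = 0`
and Right only to `xo_ = *`, so `xxo = {0 | *} = ↑`; `ox = *`; and in `ooxo` Left moves to
`ox_o = *` or `oo_x = 0` while both Right moves leave a dead position, so
`ooxo = {*, 0 | 0, 0}` (`_` marks an empty cell). The theorem is then the classical identity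
`↑ + * = {0, * | 0}`, a finite comparison of game trees of depth at most three.
-/

namespace SetTheory.PGame

def LF (x y : PGame.{u}) : Prop := (leLf x y).2

infix:50 " ⧏ " => LF

variable {xl xr yl yr : Type u} {xL : xl → PGame.{u}} {xR : xr → PGame.{u}}
  {yL : yl → PGame.{u}} {yR : yr → PGame.{u}}

theorem mk_le_mk_iff :
    mk xl xr xL xR ≤ mk yl yr yL yR ↔
      (∀ i, xL i ⧏ mk yl yr yL yR) ∧ ∀ j, mk xl xr xL xR ⧏ yR j :=
  Iff.rfl

theorem mk_lf_mk_iff :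
    mk xl xr xL xR ⧏ mk yl yr yL yR ↔
      (∃ i, mk xl xr xL xR ≤ yL i) ∨ ∃ j, xR j ≤ mk yl yr yL yR :=
  Iff.rfl

theorem mk_add_mk :
    mk xl xr xL xR + mk yl yr yL yR =
      mk (xl ⊕ yl) (xr ⊕ yr)
        (Sum.elim (fun i => xL i + mk yl yr yL yR) (fun i => mk xl xr xL xR + yL i))
        (Sum.elim (fun j => xR j + mk yl yr yL yR) (fun j => mk xl xr xL xR + yR j)) :=
  rfl

/-- `{ | }`. Not the same pre-game as `0`, whose option types are `PEmpty`; it is the value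
of every clobber position without moves. -/
def nil : PGame.{u} := ofLists [] []

def star : PGame.{u} := ofLists [nil] [nil]

def up : PGame.{u} := ofLists [nil] [star]

theorem ofLists_star_nil_equiv_up_add_star : ofLists [star, nil] [nil, nil] ≈ up + star := by
  constructor <;>
    simp [up, star, nil, ofLists, mk_add_mk, mk_le_mk_iff, mk_lf_mk_iff, ULift.forall,
      ULift.exists, Fin.forall_fin_succ, Fin.exists_fin_succ, Sum.forall, Sum.exists]

end SetTheory.PGame

theorem value_ooxo : value [.o, .o, .x, .o] = ofLists [star, nil] [nil, nil] := rfl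

theorem value_xxo : value [.x, .x, .o] = up := rfl

theorem value_ox : value [.o, .x] = star := rfl

/-- The clobber position `ooxo` is equivalent to the sum `xxo + ox`. -/
theorem ooxo_equiv_xxo_add_ox :
    value [Cell.o, Cell.o, Cell.x, Cell.o] ≈
      value [Cell.x, Cell.x, Cell.o] + value [Cell.o, Cell.x] := by
  rw [value_ooxo, value_xxo, value_ox]
  exact ofLists_star_nil_equiv_up_add_star
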